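/- arXiv:0709.0824 — 5 statements merged into one kernel-verified Lean document; each statement's English description precedes it below -/
import Mathlib

section
/- Let A be an n×n Hermitian complex matrix. There exists an n×n unitary matrix T such that all diagonal entries of T†AT vanish, i.e. (T†AT)_{jj} = 0 for all j = 1,…,n, if and only if Tr[A] = 0. -/
/-!
Conjugating by a unitary preserves the trace, so zero diagonal forces `Tr A = 0`. Conversely,
diagonalize `A = U D Uᴴ` by the spectral theorem and conjugate `D` further by the discrete Fourier
matrix `F`. Every entry of `F` has modulus `1/√n`, so each diagonal entry of `Fᴴ D F` is the
average `Tr D / n = Tr A / n`, which vanishes.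
-/

open scoped Matrix ComplexConjugate Real
open Matrix Complex

namespace Matrix

variable {ι R : Type*} [Fintype ι] [CommRing R] [StarRing R]

lemma trace_conjTranspose_mul_mul_of_mem_unitaryGroup [DecidableEq ι] {U : Matrix ι ι R}
    (hU : U ∈ unitaryGroup ι R) (A : Matrix ι ι R) : (Uᴴ * A * U).trace = A.trace := by
  rw [trace_mul_cycle, ← star_eq_conjTranspose, mem_unitaryGroup_iff.mp hU, one_mul]

lemma conjTranspose_mul_diagonal_mul_apply_self_of_flat [DecidableEq ι] {F : Matrix ι ι R}
    {c : R} (hF : ∀ l j, star (F l j) * F l j = c) (d : ι → R) (j : ι) :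
    (Fᴴ * diagonal d * F) j j = c * (diagonal d).trace := by
  rw [mul_apply, trace_diagonal, Finset.mul_sum]
  exact Finset.sum_congr rfl fun l _ => by rw [mul_diagonal, conjTranspose_apply, ← hF l j]; ring

end Matrix

lemma geom_sum_eq_zero_of_pow_eq_one {K : Type*} [Field K] {ω : K} {n : ℕ} (hω : ω ≠ 1)
    (hωn : ω ^ n = 1) : ∑ i ∈ Finset.range n, ω ^ i = 0 := by
  rw [geom_sum_eq hω, hωn, sub_self, zero_div]

noncomputable def dftRoot (n : ℕ) : ℂ := exp (2 * π * I / n)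

noncomputable def dftMatrix (n : ℕ) : Matrix (Fin n) (Fin n) ℂ :=
  Matrix.of fun j k => (√n : ℂ)⁻¹ * dftRoot n ^ ((j : ℕ) * k)

lemma dftRoot_ne_zero (n : ℕ) : dftRoot n ≠ 0 := Complex.exp_ne_zero _

lemma conj_dftRoot (n : ℕ) : conj (dftRoot n) = (dftRoot n)⁻¹ := by
  rw [dftRoot, ← exp_conj, ← Complex.exp_neg]
  congr 1
  simp [map_div₀, map_ofNat, neg_div]

lemma star_dftMatrix_mul_dftMatrix_apply (n : ℕ) (m j k : Fin n) :
    star (dftMatrix n m j) * dftMatrix n m k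
      = (n : ℂ)⁻¹ * (dftRoot n ^ (k : ℕ) / dftRoot n ^ (j : ℕ)) ^ (m : ℕ) := by
  have hsqrt : conj (√n : ℂ)⁻¹ * (√n : ℂ)⁻¹ = (n : ℂ)⁻¹ := by
    rw [map_inv₀, conj_ofReal, ← mul_inv, ← ofReal_mul, Real.mul_self_sqrt n.cast_nonneg,
      ofReal_natCast]
  simp only [dftMatrix, of_apply, Complex.star_def, map_mul, map_pow, conj_dftRoot, ← hsqrt]
  ring

lemma sum_dftRoot_pow_div_pow (n : ℕ) (j k : Fin n) :
    ∑ m : Fin n, (dftRoot n ^ (k : ℕ) / dftRoot n ^ (j : ℕ)) ^ (m : ℕ)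
      = if j = k then (n : ℂ) else 0 := by
  have hζ : IsPrimitiveRoot (dftRoot n) n := isPrimitiveRoot_exp n j.pos.ne'
  have hζ0 := dftRoot_ne_zero n
  rw [Fin.sum_univ_eq_sum_range (fun m => (dftRoot n ^ (k : ℕ) / dftRoot n ^ (j : ℕ)) ^ m)]
  split_ifs with hjk
  · simp [hjk, div_self (pow_ne_zero _ hζ0)]
  · refine geom_sum_eq_zero_of_pow_eq_one ?_ ?_
    · rw [Ne, div_eq_one_iff_eq (pow_ne_zero _ hζ0)]
      exact fun h => hjk (Fin.ext (hζ.pow_inj j.isLt k.isLt h.symm))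
    · simp only [div_pow, pow_right_comm _ _ n, hζ.pow_eq_one, one_pow, div_one]

lemma dftMatrix_mem_unitaryGroup (n : ℕ) : dftMatrix n ∈ unitaryGroup (Fin n) ℂ := by
  rw [mem_unitaryGroup_iff']
  ext j k
  simp only [mul_apply, star_apply, star_dftMatrix_mul_dftMatrix_apply, ← Finset.mul_sum,
    sum_dftRoot_pow_div_pow, one_apply]
  split_ifs
  · exact inv_mul_cancel₀ (Nat.cast_ne_zero.mpr j.pos.ne')
  · exact mul_zero _

lemma star_dftMatrix_mul_self_apply (n : ℕ) (l j : Fin n) :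
    star (dftMatrix n l j) * dftMatrix n l j = (n : ℂ)⁻¹ := by
  rw [star_dftMatrix_mul_dftMatrix_apply, div_self (pow_ne_zero _ (dftRoot_ne_zero n)), one_pow,
    mul_one]

/-- A Hermitian complex matrix can be unitarily conjugated to have zero diagonal
if and only if it is traceless. -/
theorem hermitian_offdiagonalizable_iff_traceless
    (n : ℕ) (A : Matrix (Fin n) (Fin n) ℂ) (hA : A.IsHermitian) :
    (∃ T : Matrix (Fin n) (Fin n) ℂ, T ∈ Matrix.unitaryGroup (Fin n) ℂ ∧
      ∀ j, (Tᴴ * A * T) j j = 0) ↔ A.trace = 0 := by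
  constructor
  · rintro ⟨T, hT, hdiag⟩
    rw [← trace_conjTranspose_mul_mul_of_mem_unitaryGroup hT A]
    exact Finset.sum_eq_zero fun j _ => hdiag j
  · intro htr
    set U : Matrix (Fin n) (Fin n) ℂ := (hA.eigenvectorUnitary : Matrix (Fin n) (Fin n) ℂ)
    have hU : U ∈ unitaryGroup (Fin n) ℂ := hA.eigenvectorUnitary.2
    have hD : Uᴴ * A * U = diagonal (RCLike.ofReal ∘ hA.eigenvalues) := by
      rw [← hA.conjStarAlgAut_star_eigenvectorUnitary, Unitary.conjStarAlgAut_star_apply]; rfl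
    refine ⟨U * dftMatrix n, mul_mem hU (dftMatrix_mem_unitaryGroup n), fun j => ?_⟩
    have hconj : (U * dftMatrix n)ᴴ * A * (U * dftMatrix n)
        = (dftMatrix n)ᴴ * (Uᴴ * A * U) * dftMatrix n := by
      simp only [conjTranspose_mul, Matrix.mul_assoc]
    rw [hconj, hD, conjTranspose_mul_diagonal_mul_apply_self_of_flat
      (star_dftMatrix_mul_self_apply n), ← hD,
      trace_conjTranspose_mul_mul_of_mem_unitaryGroup hU, htr, mul_zero]
end

section
/- Let ρ be a positive semidefinite Hermitian matrix on ℂ² ⊗ ℂ² (a 4×4 matrix) whose partial traces satisfy Tr₁ρ = Tr₂ρ = 𝟙/2 (in particular Tr ρ = 1). Then there exists an orthonormal basis of ℂ² ⊗ ℂ² consisting of eigenvectors v_j of ρ such that for every j, Tr₂|v_j⟩⟨v_j| = 𝟙/2 (equivalently, each eigenvector is maximally entangled). -/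
/-!
In the magic basis a two-qubit state with maximally mixed marginals becomes a real symmetric
matrix: the marginal conditions force `ρ` to commute with the spin flip `v ↦ (σ_y ⊗ σ_y) v̄`, which
is complex conjugation of the coordinates in the magic basis. A real orthogonal diagonalisation of
that matrix yields an eigenbasis of `ρ` made of spin-flip invariant vectors, and such a vector
`(a, b, b̄, -ā)` has coefficient matrix `!![a, b; b̄, -ā]`, a multiple of a unitary: it is maximally
entangled.
-/

open scoped BigOperators Matrix ComplexOrder

noncomputable section

/-- Partial trace over the first tensor factor. -/
def ptrace1 (d : ℕ) (ρ : Matrix (Fin d × Fin d) (Fin d × Fin d) ℂ) :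
    Matrix (Fin d) (Fin d) ℂ :=
  Matrix.of fun j l => ∑ i, ρ (i, j) (i, l)

/-- Partial trace over the second tensor factor. -/
def ptrace2 (d : ℕ) (ρ : Matrix (Fin d × Fin d) (Fin d × Fin d) ℂ) :
    Matrix (Fin d) (Fin d) ℂ :=
  Matrix.of fun i k => ∑ j, ρ (i, j) (k, j)

/-- The rank-one projector |ψ⟩⟨ψ|. -/
def outer {n : Type*} [Fintype n] (ψ : n → ℂ) : Matrix n n ℂ :=
  Matrix.of fun p q => ψ p * star (ψ q)

open Matrix Complex
open scoped Kronecker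

lemma Matrix.IsHermitian.map_ofReal_map_re {m : Type*} {A : Matrix m m ℂ} (hA : A.IsHermitian)
    (hA' : A.IsSymm) : (A.map re).map ofReal = A := by
  ext a b
  exact conj_eq_iff_re.mp ((hA.apply b a).trans (hA'.apply b a).symm)

section RealStructure

variable {n m : Type*} [Fintype n] [Fintype m] [DecidableEq m]

lemma isSymm_conjTranspose_mul_mul {ρ : Matrix n n ℂ} {M : Matrix n m ℂ} (hM : Mᴴ * M = 1)
    (hρ : M * Mᵀ * ρᵀ = ρ * (M * Mᵀ)) : (Mᴴ * ρ * M).IsSymm := by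
  have hM' : Mᵀ * Mᴴᵀ = 1 := by rw [← transpose_mul, hM, transpose_one]
  calc (Mᴴ * ρ * M)ᵀ = Mᵀ * ρᵀ * Mᴴᵀ := by
        rw [transpose_mul, transpose_mul, Matrix.mul_assoc]
    _ = Mᴴ * (M * Mᵀ * ρᵀ) * Mᴴᵀ := by
        rw [← Matrix.mul_assoc Mᴴ, ← Matrix.mul_assoc Mᴴ, hM, Matrix.one_mul]
    _ = Mᴴ * ρ * M := by
        rw [hρ, Matrix.mul_assoc, Matrix.mul_assoc, Matrix.mul_assoc, hM', Matrix.mul_one,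
          Matrix.mul_assoc]

/-- `v ↦ (M * Mᵀ) *ᵥ star v` conjugates the coordinates in the orthonormal basis of columns of `M`;
for Hermitian `ρ` (so `ρᵀ = star ρ`) the hypothesis `hρM` says that `ρ` commutes with it. -/
theorem exists_orthonormal_eigenbasis_of_commute_transpose [DecidableEq n]
    {ρ : Matrix n n ℂ} (hρ : ρ.IsHermitian) {M : Matrix n m ℂ} (hM₁ : Mᴴ * M = 1)
    (hM₂ : M * Mᴴ = 1) (hρM : M * Mᵀ * ρᵀ = ρ * (M * Mᵀ)) :
    ∃ v : m → n → ℂ,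
      (∀ j k, ∑ q, star (v j q) * v k q = if j = k then 1 else 0) ∧
      (∀ j, ∃ μ : ℝ, ρ *ᵥ v j = (μ : ℂ) • v j) ∧
      (∀ j, (M * Mᵀ) *ᵥ star (v j) = v j) := by
  set A := Mᴴ * ρ * M
  have hA : A.IsHermitian := by
    simp only [A, IsHermitian, conjTranspose_mul, conjTranspose_conjTranspose, hρ.eq,
      Matrix.mul_assoc]
  have hAs : A.IsSymm := isSymm_conjTranspose_mul_mul hM₁ hρM
  have hAr : (A.map re).map ofReal = A := hA.map_ofReal_map_re hAs
  have hB : (A.map re).IsHermitian := by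
    rw [IsHermitian, conjTranspose_eq_transpose_of_trivial, ← transpose_map, hAs.eq]
  let w j : m → ℝ := (hB.eigenvectorBasis j).ofLp
  let x j : m → ℂ := ofRealHom ∘ w j
  have hx j : star (x j) = x j := funext fun a => conj_ofReal (w j a)
  refine ⟨fun j => M *ᵥ x j, fun j k => ?_, fun j => ⟨hB.eigenvalues j, ?_⟩, fun j => ?_⟩
  · have hw : w k ⬝ᵥ star (w j) = if j = k then 1 else 0 :=
      orthonormal_iff_ite.mp hB.eigenvectorBasis.orthonormal j k
    calc ∑ q, star ((M *ᵥ x j) q) * (M *ᵥ x k) q = star (M *ᵥ x j) ⬝ᵥ M *ᵥ x k := rfl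
      _ = ofRealHom (w j ⬝ᵥ w k) := by
        rw [star_mulVec, dotProduct_mulVec, vecMul_vecMul, hM₁, vecMul_one, hx,
          RingHom.map_dotProduct]
      _ = if j = k then 1 else 0 := by
        rw [dotProduct_comm, ← star_trivial (w j), hw]; split_ifs <;> simp
  · calc ρ *ᵥ M *ᵥ x j = M *ᵥ A *ᵥ x j := by
          rw [mulVec_mulVec, mulVec_mulVec, ← Matrix.mul_assoc, ← Matrix.mul_assoc, hM₂,
            Matrix.one_mul]
      _ = M *ᵥ ofRealHom ∘ (A.map re *ᵥ w j) := by
          congr 1; ext a; rw [Function.comp_apply, RingHom.map_mulVec, ← hAr]; rfl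
      _ = (hB.eigenvalues j : ℂ) • M *ᵥ x j := by
          rw [hB.mulVec_eigenvectorBasis j, ← mulVec_smul]
          congr 1; ext a; simp [x, w]
  · rw [star_mulVec, ← mulVec_transpose, mulVec_mulVec, Matrix.mul_assoc, ← transpose_mul, hM₁,
      transpose_one, Matrix.mul_one, hx]

end RealStructure

def pauliY : Matrix (Fin 2) (Fin 2) ℂ := !![0, -I; I, 0]

def spinFlip : Matrix (Fin 2 × Fin 2) (Fin 2 × Fin 2) ℂ := pauliY ⊗ₖ pauliY

lemma spinFlip_apply (i j k l : Fin 2) : spinFlip (i, j) (k, l) = pauliY i k * pauliY j l := rfl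

/-- In the Pauli expansion of `ρ` the marginal conditions remove the terms `σ_a ⊗ 1` and `1 ⊗ σ_b`
with `a, b ≠ 0`, and every remaining term `σ_a ⊗ σ_b` commutes with the spin flip in this sense
because `σ_y σ_aᵀ σ_y = -σ_a`. -/
lemma spinFlip_mul_transpose_eq_mul_spinFlip {ρ : Matrix (Fin 2 × Fin 2) (Fin 2 × Fin 2) ℂ}
    {c : ℂ} (h1 : ptrace1 2 ρ = c • 1) (h2 : ptrace2 2 ρ = c • 1) :
    spinFlip * ρᵀ = ρ * spinFlip := by
  have e1 (j l : Fin 2) : ρ (0, j) (0, l) + ρ (1, j) (1, l) = if j = l then c else 0 := by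
    simpa [ptrace1, Fin.sum_univ_two, one_apply] using congr_fun₂ h1 j l
  have e2 (i k : Fin 2) : ρ (i, 0) (k, 0) + ρ (i, 1) (k, 1) = if i = k then c else 0 := by
    simpa [ptrace2, Fin.sum_univ_two, one_apply] using congr_fun₂ h2 i k
  ext ⟨i, j⟩ ⟨k, l⟩
  simp only [mul_apply, Fintype.sum_prod_type, Fin.sum_univ_two, spinFlip_apply, transpose_apply]
  fin_cases i <;> fin_cases j <;> fin_cases k <;> fin_cases l <;>
    simp only [pauliY, of_apply, cons_val', cons_val_zero, cons_val_one, cons_val_fin_one,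
      Fin.zero_eta, Fin.mk_one, Fin.isValue] <;>
    grind

lemma ptrace2_outer_of_spinFlip_mulVec_star {v : Fin 2 × Fin 2 → ℂ}
    (hv : spinFlip *ᵥ star v = v) :
    ptrace2 2 (outer v) = (2⁻¹ * ∑ q, star (v q) * v q) • 1 := by
  have h00 : v (0, 0) = -star (v (1, 1)) := by
    simpa [mulVec, dotProduct, Fintype.sum_prod_type, spinFlip_apply, pauliY]
      using (congr_fun hv (0, 0)).symm
  have h01 : v (0, 1) = star (v (1, 0)) := by
    simpa [mulVec, dotProduct, Fintype.sum_prod_type, spinFlip_apply, pauliY]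
      using (congr_fun hv (0, 1)).symm
  ext i k
  fin_cases i <;> fin_cases k <;>
    simp only [ptrace2, outer, of_apply, Fintype.sum_prod_type, Fin.sum_univ_two, Fin.zero_eta,
      Fin.mk_one, Matrix.smul_apply, smul_eq_mul, one_apply_eq, one_apply_ne zero_ne_one,
      one_apply_ne one_ne_zero, h00, h01, star_neg, star_star] <;>
    ring

/-- The columns are the magic basis `i|Φ⁺⟩, |Φ⁻⟩, |Ψ⁺⟩, i|Ψ⁻⟩` (before normalisation), with
the phases chosen so that `magicMatrix * magicMatrixᵀ = 2 • spinFlip`. -/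
def magicMatrix : Matrix (Fin 2 × Fin 2) (Fin 4) ℂ :=
  Matrix.of fun p =>
    ![![![I, 1, 0, 0], ![0, 0, 1, I]],
      ![![0, 0, 1, -I], ![I, -1, 0, 0]]] p.1 p.2

def magicBasis : Matrix (Fin 2 × Fin 2) (Fin 4) ℂ := (√2 : ℂ)⁻¹ • magicMatrix

lemma magicMatrix_conjTranspose_mul : magicMatrixᴴ * magicMatrix = (2 : ℂ) • 1 := by
  ext a b
  fin_cases a <;> fin_cases b <;>
    simp [magicMatrix, mul_apply, Fintype.sum_prod_type, one_apply, one_add_one_eq_two]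

lemma magicMatrix_mul_conjTranspose : magicMatrix * magicMatrixᴴ = (2 : ℂ) • 1 := by
  ext ⟨i, j⟩ ⟨k, l⟩
  fin_cases i <;> fin_cases j <;> fin_cases k <;> fin_cases l <;>
    simp [magicMatrix, mul_apply, Fin.sum_univ_four, one_apply, one_add_one_eq_two]

lemma magicMatrix_mul_transpose : magicMatrix * magicMatrixᵀ = (2 : ℂ) • spinFlip := by
  ext ⟨i, j⟩ ⟨k, l⟩
  fin_cases i <;> fin_cases j <;> fin_cases k <;> fin_cases l <;>
    simp [magicMatrix, mul_apply, Fin.sum_univ_four, spinFlip_apply, pauliY, one_add_one_eq_two,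
      ← neg_add_rev]

lemma sqrt_two_inv_mul_self : (√2 : ℂ)⁻¹ * (√2 : ℂ)⁻¹ = 2⁻¹ := by
  rw [← mul_inv, ← ofReal_mul, Real.mul_self_sqrt zero_le_two]
  norm_num

lemma star_sqrt_two_inv : star (√2 : ℂ)⁻¹ = (√2 : ℂ)⁻¹ := by
  rw [star_inv₀, RCLike.star_def, conj_ofReal]

lemma magicBasis_conjTranspose_mul : magicBasisᴴ * magicBasis = 1 := by
  rw [magicBasis, conjTranspose_smul, star_sqrt_two_inv, Matrix.smul_mul, Matrix.mul_smul,
    smul_smul, sqrt_two_inv_mul_self, magicMatrix_conjTranspose_mul, smul_smul,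
    inv_mul_cancel₀ two_ne_zero, one_smul]

lemma magicBasis_mul_conjTranspose : magicBasis * magicBasisᴴ = 1 := by
  rw [magicBasis, conjTranspose_smul, star_sqrt_two_inv, Matrix.smul_mul, Matrix.mul_smul,
    smul_smul, sqrt_two_inv_mul_self, magicMatrix_mul_conjTranspose, smul_smul,
    inv_mul_cancel₀ two_ne_zero, one_smul]

lemma magicBasis_mul_transpose : magicBasis * magicBasisᵀ = spinFlip := by
  rw [magicBasis, transpose_smul, Matrix.smul_mul, Matrix.mul_smul, smul_smul,
    sqrt_two_inv_mul_self, magicMatrix_mul_transpose, smul_smul, inv_mul_cancel₀ two_ne_zero,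
    one_smul]

/-- A two-qubit state with both partial traces maximally mixed admits an orthonormal
eigenbasis consisting of maximally entangled vectors. -/
theorem eigenbasis_maximally_entangled_of_doubly_stochastic
    (ρ : Matrix (Fin 2 × Fin 2) (Fin 2 × Fin 2) ℂ) (hρ : ρ.PosSemidef)
    (h1 : ptrace1 2 ρ = (2 : ℂ)⁻¹ • 1) (h2 : ptrace2 2 ρ = (2 : ℂ)⁻¹ • 1) :
    ∃ v : Fin 4 → (Fin 2 × Fin 2) → ℂ,
      (∀ j k, ∑ q, star (v j q) * v k q = if j = k then 1 else 0) ∧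
      (∀ j, ∃ μ : ℝ, ρ.mulVec (v j) = (μ : ℂ) • v j) ∧
      (∀ j, ptrace2 2 (outer (v j)) = (2 : ℂ)⁻¹ • 1) := by
  have hcomm : magicBasis * magicBasisᵀ * ρᵀ = ρ * (magicBasis * magicBasisᵀ) := by
    rw [magicBasis_mul_transpose]
    exact spinFlip_mul_transpose_eq_mul_spinFlip h1 h2
  obtain ⟨v, hv_orth, hv_eig, hv_fix⟩ := exists_orthonormal_eigenbasis_of_commute_transpose hρ.1
    magicBasis_conjTranspose_mul magicBasis_mul_conjTranspose hcomm
  refine ⟨v, hv_orth, hv_eig, fun j => ?_⟩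
  rw [magicBasis_mul_transpose] at hv_fix
  rw [ptrace2_outer_of_spinFlip_mulVec_star (hv_fix j), hv_orth j j, if_pos rfl, mul_one]
end
end

section
/- Let ρ be a Hermitian matrix on ℂ² ⊗ ℂ² (a 4×4 matrix) such that Tr₁ρ = k·𝟙 and Tr₂ρ = k'·𝟙 for some real numbers k, k'. Then there exist real numbers m, m' such that Tr₁(ρ²) = m·𝟙 and Tr₂(ρ²) = m'·𝟙; that is, both partial traces of ρ² are again real multiples of the 2×2 identity. -/
open scoped BigOperators Matrix

noncomputable section

/-! Write ρ as a 2 × 2 matrix of blocks `B i j`, so that `Tr₁ ρ = B 0 0 + B 1 1`,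
`(Tr₂ ρ) i j = tr (B i j)` and `(Tr₂ ρ²) i j = ∑ p, tr (B i p * B p j)`. Once `B 0 0 + B 1 1 = c • 1`,
cyclicity of the trace turns `tr (B 0 0 * B 0 1) + tr (B 0 1 * B 1 1)` into `c * tr (B 0 1) = 0`,
and likewise makes the two diagonal entries of `Tr₂ ρ²` equal since `tr (B 0 0) = tr (B 1 1)`.
Swapping the tensor factors exchanges `Tr₁` and `Tr₂`, and Hermiticity makes the scalars real. -/

open Matrix

section BlockMatrix

variable {R n : Type*} [CommRing R] [Fintype n] [DecidableEq n]

theorem exists_map_trace_mul_self_eq_smul_one (B : Matrix (Fin 2) (Fin 2) (Matrix n n R))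
    {c c' : R} (hB : B.trace = c • 1) (htr : B.map trace = c' • 1) :
    ∃ a : R, (B * B).map trace = a • 1 := by
  have hsum : B 0 0 + B 1 1 = c • 1 := by simpa [Matrix.trace, Fin.sum_univ_two] using hB
  have htr₀₁ : trace (B 0 1) = 0 := by simpa using congrFun (congrFun htr 0) 1
  have htr₁₀ : trace (B 1 0) = 0 := by simpa using congrFun (congrFun htr 1) 0
  have htr_diag : trace (B 0 0) = trace (B 1 1) := by
    simpa using (congrFun (congrFun htr 0) 0).trans (congrFun (congrFun htr 1) 1).symm
  have trace_mul_diag (X : Matrix n n R) :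
      trace (X * B 0 0) + trace (X * B 1 1) = c * trace X := by
    rw [← trace_add, ← mul_add, hsum, mul_smul_comm, mul_one, trace_smul, smul_eq_mul]
  have h₀₁ : trace (B 0 0 * B 0 1) + trace (B 0 1 * B 1 1) = 0 := by
    rw [trace_mul_comm (B 0 0), trace_mul_diag, htr₀₁, mul_zero]
  have h₁₀ : trace (B 1 0 * B 0 0) + trace (B 1 1 * B 1 0) = 0 := by
    rw [trace_mul_comm (B 1 1), trace_mul_diag, htr₁₀, mul_zero]
  have h₁₁ : trace (B 1 0 * B 0 1) + trace (B 1 1 * B 1 1) =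
      trace (B 0 0 * B 0 0) + trace (B 0 1 * B 1 0) := by
    linear_combination trace_mul_diag (B 1 1) - trace_mul_diag (B 0 0) + c * htr_diag.symm +
      trace_mul_comm (B 1 0) (B 0 1) + trace_mul_comm (B 0 0) (B 1 1)
  refine ⟨trace (B 0 0 * B 0 0) + trace (B 0 1 * B 1 0), ?_⟩
  ext i j
  fin_cases i <;> fin_cases j <;> simp [Matrix.mul_apply, Fin.sum_univ_two, h₀₁, h₁₀, h₁₁]

end BlockMatrix

theorem Matrix.comp_symm_mul {m n α : Type*} [Fintype m] [Fintype n] [AddCommMonoid α] [Mul α]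
    (A B : Matrix (m × n) (m × n) α) :
    (comp m m n n α).symm (A * B) = (comp m m n n α).symm A * (comp m m n n α).symm B :=
  map_mul (compRingEquiv m n α).symm A B

theorem Matrix.IsHermitian.exists_real_of_eq_smul_one {n : Type*} [DecidableEq n] [Nonempty n]
    {A : Matrix n n ℂ} {a : ℂ} (hA : A.IsHermitian) (h : A = a • 1) :
    ∃ r : ℝ, A = (r : ℂ) • 1 := by
  obtain ⟨r, rfl⟩ : ∃ r : ℝ, a = r := by
    rw [← Complex.conj_eq_iff_real]
    inhabit n
    simpa [h] using hA.apply default default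
  exact ⟨r, h⟩

section PartialTrace

variable {d : ℕ} (ρ : Matrix (Fin d × Fin d) (Fin d × Fin d) ℂ)

theorem ptrace1_eq_trace_comp_symm : ptrace1 d ρ = ((comp _ _ _ _ ℂ).symm ρ).trace := by
  ext j l
  simp [ptrace1, Matrix.trace, Matrix.sum_apply]

theorem ptrace2_eq_map_trace_comp_symm : ptrace2 d ρ = ((comp _ _ _ _ ℂ).symm ρ).map trace :=
  rfl

theorem ptrace1_submatrix_swap : ptrace1 d (ρ.submatrix Prod.swap Prod.swap) = ptrace2 d ρ :=
  rfl

theorem ptrace2_submatrix_swap : ptrace2 d (ρ.submatrix Prod.swap Prod.swap) = ptrace1 d ρ :=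
  rfl

variable {ρ}

theorem Matrix.IsHermitian.ptrace2 (hρ : ρ.IsHermitian) : (ptrace2 d ρ).IsHermitian := by
  ext i k
  simp [_root_.ptrace2, star_sum, hρ.apply]

theorem Matrix.IsHermitian.ptrace1 (hρ : ρ.IsHermitian) : (ptrace1 d ρ).IsHermitian :=
  ptrace2_submatrix_swap ρ ▸ (hρ.submatrix Prod.swap).ptrace2

end PartialTrace

theorem exists_ptrace2_mul_self_eq_smul_one {ρ : Matrix (Fin 2 × Fin 2) (Fin 2 × Fin 2) ℂ}
    {c c' : ℂ} (h1 : ptrace1 2 ρ = c • 1) (h2 : ptrace2 2 ρ = c' • 1) :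
    ∃ a : ℂ, ptrace2 2 (ρ * ρ) = a • 1 := by
  rw [ptrace1_eq_trace_comp_symm] at h1
  rw [ptrace2_eq_map_trace_comp_symm, comp_symm_mul]
  exact exists_map_trace_mul_self_eq_smul_one _ h1 h2

theorem exists_ptrace1_mul_self_eq_smul_one {ρ : Matrix (Fin 2 × Fin 2) (Fin 2 × Fin 2) ℂ}
    {c c' : ℂ} (h1 : ptrace1 2 ρ = c • 1) (h2 : ptrace2 2 ρ = c' • 1) :
    ∃ a : ℂ, ptrace1 2 (ρ * ρ) = a • 1 := by
  rw [← ptrace2_submatrix_swap, ← submatrix_mul_equiv _ _ _ (Equiv.prodComm _ _)]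
  exact exists_ptrace2_mul_self_eq_smul_one (ρ := ρ.submatrix Prod.swap Prod.swap) h2 h1

/-- If a two-qubit Hermitian matrix has both partial traces proportional to the identity,
then so does its square. -/
theorem ptraces_of_sq_scalar
    (ρ : Matrix (Fin 2 × Fin 2) (Fin 2 × Fin 2) ℂ) (hρ : ρ.IsHermitian)
    (k k' : ℝ)
    (h1 : ptrace1 2 ρ = (k : ℂ) • 1) (h2 : ptrace2 2 ρ = (k' : ℂ) • 1) :
    ∃ m m' : ℝ, ptrace1 2 (ρ * ρ) = (m : ℂ) • 1 ∧ ptrace2 2 (ρ * ρ) = (m' : ℂ) • 1 := by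
  have hρρ : (ρ * ρ).IsHermitian := by simpa [sq] using hρ.pow 2
  obtain ⟨a, ha⟩ := exists_ptrace1_mul_self_eq_smul_one h1 h2
  obtain ⟨a', ha'⟩ := exists_ptrace2_mul_self_eq_smul_one h1 h2
  obtain ⟨m, hm⟩ := hρρ.ptrace1.exists_real_of_eq_smul_one ha
  obtain ⟨m', hm'⟩ := hρρ.ptrace2.exists_real_of_eq_smul_one ha'
  exact ⟨m, m', hm, hm'⟩
end
end

section
/- Let 𝒞 = { σ : σ a positive semidefinite matrix on ℂ^d ⊗ ℂ^d with Tr₁σ = 𝟙/d } (the set of state representatives of completely positive trace-preserving maps on ℂ^d). If σ is an extreme point of the convex set 𝒞, then rank σ ≤ d. -/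
open scoped BigOperators Matrix ComplexOrder

noncomputable section

/-- The set of Choi matrices of completely positive trace-preserving maps on ℂ^d. -/
def CPTSet (d : ℕ) : Set (Matrix (Fin d × Fin d) (Fin d × Fin d) ℂ) :=
  { σ | σ.PosSemidef ∧ ptrace1 d σ = (d : ℂ)⁻¹ • 1 }

/-!
Write `σ = B Bᴴ` where `B` has `rank σ` columns and `Bᴴ B` is invertible. The linear map
`X ↦ Tr₁ (B X Bᴴ)` sends `rank σ × rank σ` matrices to `d × d` matrices, so for `rank σ > d` its
kernel is nonzero; as `Tr₁` commutes with `ᴴ`, the kernel contains a nonzero Hermitian `N`. For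
small `t > 0` both `σ ± B (t N) Bᴴ = B (1 ± t N) Bᴴ` lie in `𝒞`, and `σ` is their midpoint.
-/

theorem eq_zero_of_add_mem_of_sub_mem_of_mem_extremePoints {𝕜 E : Type*} [Field 𝕜]
    [LinearOrder 𝕜] [IsStrictOrderedRing 𝕜] [AddCommGroup E] [Module 𝕜 E] {A : Set E} {x h : E}
    (hx : x ∈ A.extremePoints 𝕜) (hadd : x + h ∈ A) (hsub : x - h ∈ A) : h = 0 := by
  have hmid : x ∈ openSegment 𝕜 (x + h) (x - h) :=
    ⟨1 / 2, 1 / 2, by norm_num, by norm_num, by norm_num, by module⟩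
  simpa using (mem_extremePoints.mp hx).2 _ hadd _ hsub hmid

open ComplexStarModule in
theorem Submodule.exists_ne_zero_isSelfAdjoint_mem {A : Type*} [AddCommGroup A] [Module ℂ A]
    [StarAddMonoid A] [StarModule ℂ A] (K : Submodule ℂ A) (hK : ∀ x ∈ K, star x ∈ K)
    (hne : K ≠ ⊥) : ∃ x ∈ K, x ≠ 0 ∧ IsSelfAdjoint x := by
  obtain ⟨a, ha, ha0⟩ := K.ne_bot_iff.mp hne
  have hre : (ℜ a : A) ∈ K := by
    rw [realPart_apply_coe]
    exact K.smul_of_tower_mem _ (K.add_mem ha (hK a ha))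
  have him : (ℑ a : A) ∈ K := by
    rw [imaginaryPart_apply_coe]
    exact K.smul_mem _ (K.smul_of_tower_mem _ (K.sub_mem ha (hK a ha)))
  by_cases hre0 : (ℜ a : A) = 0
  · refine ⟨ℑ a, him, fun him0 => ha0 ?_, (ℑ a).2⟩
    rw [← realPart_add_I_smul_imaginaryPart a, hre0, him0, smul_zero, add_zero]
  · exact ⟨ℜ a, hre, hre0, (ℜ a).2⟩

namespace Matrix

variable {n m : Type*} [Fintype n] [Fintype m]

open scoped Matrix.Norms.L2Operator MatrixOrder in
theorem IsHermitian.exists_pos_posSemidef_one_add_smul_one_sub_smul [DecidableEq n]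
    {N : Matrix n n ℂ} (hN : N.IsHermitian) :
    ∃ t : ℝ, 0 < t ∧ (1 + t • N).PosSemidef ∧ (1 - t • N).PosSemidef := by
  set t : ℝ := (‖N‖ + 1)⁻¹
  have ht : 0 < t := by positivity
  have hnorm : ‖t • N‖ ≤ 1 := by
    rw [norm_smul, Real.norm_of_nonneg ht.le, inv_mul_le_one₀ (by positivity)]
    linarith
  have hsa : IsSelfAdjoint (t • N) := (IsSelfAdjoint.all t).smul hN.isSelfAdjoint
  refine ⟨t, ht, ?_, ?_⟩
  · rw [← nonneg_iff_posSemidef, ← neg_le_iff_add_nonneg']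
    calc (-1 : Matrix n n ℂ) = -algebraMap ℝ _ 1 := by rw [map_one]
      _ ≤ -algebraMap ℝ _ ‖t • N‖ := neg_le_neg (algebraMap_mono _ hnorm)
      _ ≤ t • N := hsa.neg_algebraMap_norm_le_self
  · rw [← nonneg_iff_posSemidef, sub_nonneg]
    calc t • N ≤ algebraMap ℝ _ ‖t • N‖ := hsa.le_algebraMap_norm_self
      _ ≤ algebraMap ℝ _ 1 := algebraMap_mono (Matrix n n ℂ) hnorm
      _ = 1 := map_one _

theorem PosSemidef.exists_eq_mul_conjTranspose_isUnit {𝕜 : Type*} [RCLike 𝕜] [DecidableEq n]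
    {A : Matrix n n 𝕜} (hA : A.PosSemidef) :
    ∃ B : Matrix n {i // hA.1.eigenvalues i ≠ 0} 𝕜, A = B * Bᴴ ∧ IsUnit (Bᴴ * B) := by
  set U : Matrix n n 𝕜 := (hA.1.eigenvectorUnitary : Matrix n n 𝕜)
  set μ := hA.1.eigenvalues
  have hsq (k : n) : (√(μ k) : 𝕜) * (√(μ k) : 𝕜) = μ k := by
    rw [← RCLike.ofReal_mul, Real.mul_self_sqrt (hA.eigenvalues_nonneg k)]
  set B : Matrix n {i // μ i ≠ 0} 𝕜 := of fun i k => U i k * √(μ k) with hB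
  refine ⟨B, ?_, ?_⟩
  · ext i j
    have hterm (k : n) : U i k * (√(μ k) : 𝕜) * star (U j k * √(μ k)) =
        U i k * μ k * star (U j k) := by
      rw [star_mul', RCLike.star_def, RCLike.conj_ofReal, ← hsq]; ring
    have hspec : A = U * diagonal (RCLike.ofReal ∘ μ) * star U := by
      simpa only [Unitary.conjStarAlgAut_apply] using hA.1.spectral_theorem
    rw [hspec, mul_apply, mul_apply]
    simp only [mul_diagonal, star_apply, conjTranspose_apply, hB, of_apply, hterm,
      Function.comp_apply]
    rw [← Finset.sum_subtype (Finset.univ.filter fun k => μ k ≠ 0) (by simp)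
      (fun k => U i k * μ k * star (U j k))]
    refine (Finset.sum_filter_of_ne fun k _ hk => ?_).symm
    contrapose! hk
    simp [hk]
  · have hUU : star U * U = 1 := Unitary.coe_star_mul_self _
    have hBB : Bᴴ * B = diagonal fun k : {i // μ i ≠ 0} => (μ k : 𝕜) := by
      ext k l
      have horth := congr_fun₂ hUU k l
      simp only [mul_apply, star_apply, conjTranspose_apply, hB, of_apply] at horth ⊢
      calc ∑ j, star (U j k * √(μ k)) * (U j l * √(μ l))
          = (√(μ k) : 𝕜) * √(μ l) * ∑ j, star (U j k) * U j l := by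
            rw [Finset.mul_sum]
            refine Finset.sum_congr rfl fun j _ => ?_
            rw [star_mul', RCLike.star_def, RCLike.conj_ofReal]; ring
        _ = diagonal (fun k : {i // μ i ≠ 0} => (μ k : 𝕜)) k l := by
          rw [horth]
          obtain rfl | hkl := eq_or_ne k l
          · simp [hsq]
          · simp [one_apply_ne (Subtype.coe_injective.ne hkl), hkl]
    rw [hBB, isUnit_diagonal, Pi.isUnit_iff]
    exact fun k => (RCLike.ofReal_ne_zero.mpr k.2).isUnit

theorem injective_mul_mul_conjTranspose_of_isUnit [DecidableEq m] {α : Type*} [Ring α]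
    [StarRing α] {B : Matrix n m α} (hB : IsUnit (Bᴴ * B)) :
    Function.Injective fun X : Matrix m m α => B * X * Bᴴ := by
  intro X Y hXY
  have h : Bᴴ * B * X * (Bᴴ * B) = Bᴴ * B * Y * (Bᴴ * B) := by
    simpa only [Matrix.mul_assoc] using congr(Bᴴ * $hXY * B)
  exact hB.mul_left_cancel (hB.mul_right_cancel h)

theorem exists_ne_zero_map_eq_zero_posSemidef_add_sub [DecidableEq m] {k : Type*} [Fintype k]
    (B : Matrix n m ℂ) (hB : IsUnit (Bᴴ * B)) (L : Matrix n n ℂ →ₗ[ℂ] Matrix k k ℂ)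
    (hL : ∀ X, L Xᴴ = (L X)ᴴ) (hcard : Fintype.card k < Fintype.card m) :
    ∃ H, H ≠ 0 ∧ L H = 0 ∧ (B * Bᴴ + H).PosSemidef ∧ (B * Bᴴ - H).PosSemidef := by
  set Φ := L ∘ₗ mulLeftLinearMap n ℂ B ∘ₗ mulRightLinearMap m ℂ Bᴴ
  have hΦ (X : Matrix m m ℂ) : Φ X = L (B * X * Bᴴ) := by
    simp [Φ, Matrix.mul_assoc]
  have hker : LinearMap.ker Φ ≠ ⊥ := LinearMap.ker_ne_bot_of_finrank_lt <| by
    simp only [Module.finrank_matrix, Module.finrank_self, mul_one]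
    exact Nat.mul_lt_mul'' hcard hcard
  have hstar (X : Matrix m m ℂ) (hX : X ∈ LinearMap.ker Φ) : star X ∈ LinearMap.ker Φ := by
    have hconj : B * Xᴴ * Bᴴ = (B * X * Bᴴ)ᴴ := by
      simp only [conjTranspose_mul, conjTranspose_conjTranspose, Matrix.mul_assoc]
    rw [LinearMap.mem_ker, hΦ] at hX ⊢
    rw [star_eq_conjTranspose, hconj, hL, hX, conjTranspose_zero]
  obtain ⟨N, hN, hN0, hNsa⟩ := (LinearMap.ker Φ).exists_ne_zero_isSelfAdjoint_mem hstar hker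
  obtain ⟨t, ht, hplus, hminus⟩ := hNsa.isHermitian.exists_pos_posSemidef_one_add_smul_one_sub_smul
  refine ⟨B * (t • N) * Bᴴ, ?_, ?_, ?_, ?_⟩
  · intro h0
    refine smul_ne_zero ht.ne' hN0 (injective_mul_mul_conjTranspose_of_isUnit hB ?_)
    simpa only [Matrix.mul_zero, Matrix.zero_mul] using h0
  · rw [Matrix.mul_smul, Matrix.smul_mul, LinearMap.map_smul_of_tower, ← hΦ, hN, smul_zero]
  · simpa only [Matrix.mul_add, Matrix.add_mul, Matrix.mul_one]
      using hplus.mul_mul_conjTranspose_same B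
  · simpa only [Matrix.mul_sub, Matrix.sub_mul, Matrix.mul_one]
      using hminus.mul_mul_conjTranspose_same B

end Matrix

def ptrace1LinearMap (d : ℕ) :
    Matrix (Fin d × Fin d) (Fin d × Fin d) ℂ →ₗ[ℂ] Matrix (Fin d) (Fin d) ℂ where
  toFun := ptrace1 d
  map_add' X Y := by ext j l; simp [ptrace1, Finset.sum_add_distrib]
  map_smul' c X := by ext j l; simp [ptrace1, Finset.mul_sum]

theorem ptrace1_conjTranspose {d : ℕ} (X : Matrix (Fin d × Fin d) (Fin d × Fin d) ℂ) :
    ptrace1 d Xᴴ = (ptrace1 d X)ᴴ := by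
  ext j l
  simp [ptrace1, Matrix.conjTranspose_apply]

theorem rank_extreme_CPT_le_general
    (d : ℕ)
    (σ : Matrix (Fin d × Fin d) (Fin d × Fin d) ℂ)
    (hσ : σ ∈ Set.extremePoints ℝ (CPTSet d)) :
    σ.rank ≤ d := by
  obtain ⟨hσpsd, hσtr⟩ : σ ∈ CPTSet d := hσ.1
  by_contra! hrank
  obtain ⟨B, hσB, hB⟩ := hσpsd.exists_eq_mul_conjTranspose_isUnit
  have hcard : Fintype.card (Fin d) < Fintype.card {i // hσpsd.1.eigenvalues i ≠ 0} := by
    rwa [Fintype.card_fin, ← hσpsd.1.rank_eq_card_non_zero_eigs]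
  obtain ⟨H, hH0, hLH, hplus, hminus⟩ := Matrix.exists_ne_zero_map_eq_zero_posSemidef_add_sub
    B hB (ptrace1LinearMap d) ptrace1_conjTranspose hcard
  rw [← hσB] at hplus hminus
  refine hH0 (eq_zero_of_add_mem_of_sub_mem_of_mem_extremePoints hσ ⟨hplus, ?_⟩ ⟨hminus, ?_⟩)
  · change ptrace1LinearMap d (σ + H) = _
    rw [map_add, hLH, add_zero]
    exact hσtr
  · change ptrace1LinearMap d (σ - H) = _
    rw [map_sub, hLH, sub_zero]
    exact hσtr

/-- Extreme points of the set of CPT Choi matrices have rank at most d. -/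
theorem rank_extreme_CPT_le
    (d : ℕ) (hd : 0 < d)
    (σ : Matrix (Fin d × Fin d) (Fin d × Fin d) ℂ)
    (hσ : σ ∈ Set.extremePoints ℝ (CPTSet d)) :
    σ.rank ≤ d :=
  rank_extreme_CPT_le_general d σ hσ
end
end

section
/- Let A₁ and A₂ be 2×2 complex matrices satisfying the double stochasticity constraints A₁A₁† + A₂A₂† = 𝟙 and A₁†A₁ + A₂†A₂ = 𝟙. Then the four 4×4 block-diagonal matrices { A_k†A_l ⊕ A_lA_k† : k, l ∈ {1,2} } are linearly dependent over ℂ. (Consequently, by the Landau–Streater extremality criterion, there are no rank-2 extremal doubly stochastic completely positive qubit maps.) -/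
/-!
Let `P = A₁†A₁` and `Φ(X) = A₁XA₁† + A₂XA₂†`. The two constraints give `A₁A₁†A₂ = A₂A₁†A₁`,
from which `Φ(A_k†A_l) = A_lA_k†` and `[P, A_k†A_l] = 0` for all `k, l`. The first identity turns
every linear relation among the `A_k†A_l` into one among the block sums `A_k†A_l ⊕ A_lA_k†`.
If the four `A_k†A_l` were independent they would span `M₂(ℂ)`, so `P` would be central, i.e. a
scalar `c`; but then `A₁†A₁ = c (A₁†A₁ + A₂†A₂)` is a nontrivial relation.
-/

open scoped Matrix

-- The Heisenberg-picture dual `X ↦ ∑ AᵢXAᵢ†` of the channel `ρ ↦ ∑ Aᵢ†ρAᵢ`.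
def krausMap (K : Type*) {R ι : Type*} [CommSemiring K] [Semiring R] [Algebra K R] [Star R]
    [Fintype ι] (A : ι → R) : R →ₗ[K] R :=
  ∑ i, LinearMap.mulLeft K (A i) ∘ₗ LinearMap.mulRight K (star (A i))

@[simp]
theorem krausMap_apply {K R ι : Type*} [CommSemiring K] [Semiring R] [Algebra K R] [Star R]
    [Fintype ι] (A : ι → R) (x : R) : krausMap K A x = ∑ i, A i * x * star (A i) := by
  simp [krausMap, mul_assoc]

section StarRing

variable {R : Type*} [Ring R] [StarRing R] {a b : R}

theorem mul_star_mul_eq_mul_star_mul (h₁ : a * star a + b * star b = 1)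
    (h₂ : star a * a + star b * b = 1) : a * star a * b = b * (star a * a) := by
  rw [eq_sub_of_add_eq h₁, eq_sub_of_add_eq h₂]
  noncomm_ring

theorem commute_star_mul_self_star_mul (h₁ : a * star a + b * star b = 1)
    (h₂ : star a * a + star b * b = 1) : Commute (star a * a) (star a * b) :=
  calc star a * a * (star a * b) = star a * (a * star a * b) := by noncomm_ring
    _ = star a * b * (star a * a) := by rw [mul_star_mul_eq_mul_star_mul h₁ h₂]; noncomm_ring

theorem conj_add_conj_star_mul_self (h₁ : a * star a + b * star b = 1)
    (h₂ : star a * a + star b * b = 1) :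
    a * (star a * a) * star a + b * (star a * a) * star b = a * star a :=
  calc _ = a * star a * (a * star a) + a * star a * (b * star b) := by
        rw [← mul_assoc _ b, mul_star_mul_eq_mul_star_mul h₁ h₂]; noncomm_ring
    _ = a * star a := by rw [← mul_add, h₁, mul_one]

theorem conj_add_conj_star_mul (h₁ : a * star a + b * star b = 1)
    (h₂ : star a * a + star b * b = 1) :
    a * (star a * b) * star a + b * (star a * b) * star b = b * star a :=
  calc _ = b * star a * (a * star a) + b * star a * (b * star b) := by
        rw [← mul_assoc a, mul_star_mul_eq_mul_star_mul h₁ h₂]; noncomm_ring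
    _ = b * star a := by rw [← mul_add, h₁, mul_one]

variable {A : Fin 2 → R}

theorem commute_star_mul_self_star_mul_fin_two
    (h₁ : A 0 * star (A 0) + A 1 * star (A 1) = 1)
    (h₂ : star (A 0) * A 0 + star (A 1) * A 1 = 1) (k l : Fin 2) :
    Commute (star (A 0) * A 0) (star (A k) * A l) := by
  have h01 := commute_star_mul_self_star_mul h₁ h₂
  match k, l with
  | 0, 0 => exact Commute.refl _
  | 0, 1 => exact h01
  | 1, 0 => simpa using h01.star_star
  | 1, 1 =>
    rw [eq_sub_of_add_eq' h₂]
    exact (Commute.one_right _).sub_right (Commute.refl _)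

theorem krausMap_star_mul_fin_two {K : Type*} [CommSemiring K] [Algebra K R]
    (h₁ : A 0 * star (A 0) + A 1 * star (A 1) = 1)
    (h₂ : star (A 0) * A 0 + star (A 1) * A 1 = 1) (k l : Fin 2) :
    krausMap K A (star (A k) * A l) = A l * star (A k) := by
  have h₁' := (add_comm _ _).trans h₁
  have h₂' := (add_comm _ _).trans h₂
  rw [krausMap_apply, Fin.sum_univ_two]
  match k, l with
  | 0, 0 => exact conj_add_conj_star_mul_self h₁ h₂
  | 0, 1 => exact conj_add_conj_star_mul h₁ h₂
  | 1, 0 => exact (add_comm _ _).trans (conj_add_conj_star_mul h₁' h₂')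
  | 1, 1 => exact (add_comm _ _).trans (conj_add_conj_star_mul_self h₁' h₂')

end StarRing

namespace Matrix

variable {K : Type*} [Field K]

theorem mem_range_scalar_of_linearIndependent_commute {n ι : Type*} [Fintype n] [DecidableEq n]
    [Fintype ι] {P : Matrix n n K} {X : ι → Matrix n n K} (hX : LinearIndependent K X)
    (hcard : Fintype.card ι = Fintype.card n ^ 2) (hcomm : ∀ i, Commute P (X i)) :
    P ∈ Set.range (scalar n) := by
  have hspan : Submodule.span K (Set.range X) = ⊤ :=
    hX.span_eq_top_of_card_eq_finrank' (by rw [Module.finrank_matrix, hcard, sq]; simp)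
  have hcentralizer : Submodule.span K (Set.range X) ≤
      (Subalgebra.centralizer K {P}).toSubmodule := by
    refine Submodule.span_le.mpr ?_
    rintro _ ⟨i, rfl⟩
    rw [SetLike.mem_coe, Subalgebra.mem_toSubmodule, Subalgebra.mem_centralizer_iff]
    simpa using (hcomm i).eq
  rw [← center_eq_range, Semigroup.mem_center_iff]
  intro M
  have hM : M ∈ (Subalgebra.centralizer K {P}).toSubmodule := hcentralizer (hspan ▸ trivial)
  rw [Subalgebra.mem_toSubmodule, Subalgebra.mem_centralizer_iff] at hM
  exact (hM P rfl).symm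

theorem not_linearIndependent_conjTranspose_mul_fin_two [StarRing K]
    (A : Fin 2 → Matrix (Fin 2) (Fin 2) K) (h₁ : A 0 * (A 0)ᴴ + A 1 * (A 1)ᴴ = 1)
    (h₂ : (A 0)ᴴ * A 0 + (A 1)ᴴ * A 1 = 1) :
    ¬ LinearIndependent K (fun kl : Fin 2 × Fin 2 => (A kl.1)ᴴ * A kl.2) := by
  simp only [← star_eq_conjTranspose] at h₁ h₂ ⊢
  intro hX
  obtain ⟨c, hc⟩ := mem_range_scalar_of_linearIndependent_commute hX (by simp)
    fun kl => commute_star_mul_self_star_mul_fin_two h₁ h₂ kl.1 kl.2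
  have hP : star (A 0) * A 0 = c • 1 := by rw [← hc, smul_one_eq_diagonal]; rfl
  have hpair := (LinearIndepOn.pair_iff _ (by decide : ((0, 0) : Fin 2 × Fin 2) ≠ (1, 1))).mp
    (hX.linearIndepOn _) (1 - c) (-c) (by
      simp only
      rw [eq_sub_of_add_eq' h₂, hP]
      module)
  exact one_ne_zero (by linear_combination hpair.1 - hpair.2 : (1 : K) = 0)

theorem not_linearIndependent_fromBlocks_map {R m n ι : Type*} [CommSemiring R]
    (Φ : Matrix m m R →ₗ[R] Matrix n n R) {X : ι → Matrix m m R} {Y : ι → Matrix n n R}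
    (hY : ∀ i, Φ (X i) = Y i) (hX : ¬ LinearIndependent R X) :
    ¬ LinearIndependent R (fun i => fromBlocks (X i) 0 0 (Y i)) := by
  let G : Matrix m m R →ₗ[R] Matrix (m ⊕ n) (m ⊕ n) R :=
    { toFun M := fromBlocks M 0 0 (Φ M)
      map_add' M N := by simp [fromBlocks_add]
      map_smul' c M := by simp [fromBlocks_smul] }
  have hGX : G ∘ X = fun i => fromBlocks (X i) 0 0 (Y i) := funext fun i => by simp [G, hY]
  exact fun h => hX (.of_comp G (hGX ▸ h))

end Matrix

/-- For a doubly stochastic two-element qubit Kraus family {A₁, A₂}, the four matrices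
A_k†A_l ⊕ A_lA_k† are linearly dependent; hence there are no rank-2 extremal doubly
stochastic completely positive qubit maps. -/
theorem no_rank_two_extremal_doubly_stochastic_qubit
    (A : Fin 2 → Matrix (Fin 2) (Fin 2) ℂ)
    (hTP : A 0 * (A 0)ᴴ + A 1 * (A 1)ᴴ = 1)
    (hUn : (A 0)ᴴ * A 0 + (A 1)ᴴ * A 1 = 1) :
    ¬ LinearIndependent ℂ (fun kl : Fin 2 × Fin 2 =>
        Matrix.fromBlocks ((A kl.1)ᴴ * A kl.2) 0 0 (A kl.2 * (A kl.1)ᴴ)) := by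
  have hΦ (kl : Fin 2 × Fin 2) : krausMap ℂ A ((A kl.1)ᴴ * A kl.2) = A kl.2 * (A kl.1)ᴴ := by
    simp only [← Matrix.star_eq_conjTranspose] at hTP hUn ⊢
    exact krausMap_star_mul_fin_two hTP hUn kl.1 kl.2
  exact Matrix.not_linearIndependent_fromBlocks_map (krausMap ℂ A) hΦ
    (Matrix.not_linearIndependent_conjTranspose_mul_fin_two A hTP hUn)
end
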